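/- arXiv:1405.1165 — 4 statements merged into one kernel-verified Lean document; each statement's English description precedes it below -/
import Mathlib

section
/- Let d ≥ 1, let a, b be real numbers, and let φ : ℝ^d → ℝ be a C² function with 0 ≤ φ(x) < 1 for all x. Then φ solves the nuclear NLS equation −∇·(∇φ/(1−φ²)) + (|∇φ|²/(1−φ²)²)φ − aφ³ + bφ = 0 on ℝ^d if and only if the function u := arcsin ∘ φ solves the semilinear equation −Δu + b·sin(u)cos(u) − a·sin³(u)cos(u) = 0 on ℝ^d. -/
open MeasureTheory Real Filter

noncomputable section

/-- Partial derivative of a function on `ℝ^d` in the `i`-th coordinate direction. -/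
def pd {d : ℕ} (i : Fin d) (f : EuclideanSpace ℝ (Fin d) → ℝ)
    (x : EuclideanSpace ℝ (Fin d)) : ℝ :=
  fderiv ℝ f x (EuclideanSpace.single i 1)

/-- The Laplacian of a function on `ℝ^d`, written in coordinates. -/
def lap {d : ℕ} (f : EuclideanSpace ℝ (Fin d) → ℝ) (x : EuclideanSpace ℝ (Fin d)) : ℝ :=
  ∑ i, pd i (fun y => pd i f y) x

/-- The nuclear NLS equation
`−∇·(∇φ/(1−φ²)) + (|∇φ|²/(1−φ²)²)φ − aφ³ + bφ = 0` on `ℝ^d`. -/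
def NuclearNLS (d : ℕ) (a b : ℝ) (φ : EuclideanSpace ℝ (Fin d) → ℝ) : Prop :=
  ∀ x, -(∑ i, pd i (fun y => pd i φ y / (1 - φ y ^ 2)) x)
      + ((∑ i, (pd i φ x) ^ 2) / (1 - φ x ^ 2) ^ 2) * φ x
      - a * φ x ^ 3 + b * φ x = 0

/-- Quotient rule in `HasFDerivAt` form. -/
lemma myHasFDerivAt_div {E : Type*} [NormedAddCommGroup E] [NormedSpace ℝ E]
    {f g : E → ℝ} {f' g' : E →L[ℝ] ℝ} {x : E}
    (hf : HasFDerivAt f f' x) (hg : HasFDerivAt g g' x) (hx : g x ≠ 0) :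
    HasFDerivAt (fun y => f y / g y)
      ((g x)⁻¹ • f' + (-(f x) * (g x ^ 2)⁻¹) • g') x := by
  have h := hf.mul ((hasDerivAt_inv hx).comp_hasFDerivAt x hg)
  have : (fun y => f y * (g y)⁻¹) = fun y => f y / g y := by
    funext y; rw [div_eq_mul_inv]
  simp only [Function.comp_def] at h
  rw [show (f * fun x => (g x)⁻¹) = fun y => f y / g y from this] at h
  refine h.congr_fderiv ?_
  module

theorem nuclearNLS_iff_arcsin_semilinear (d : ℕ) (hd : 1 ≤ d) (a b : ℝ)
    (φ : EuclideanSpace ℝ (Fin d) → ℝ) (hφ : ContDiff ℝ 2 φ)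
    (hrange : ∀ x, 0 ≤ φ x ∧ φ x < 1) :
    NuclearNLS d a b φ ↔
      (∀ x, -(lap (fun y => Real.arcsin (φ y)) x)
          + b * Real.sin (Real.arcsin (φ x)) * Real.cos (Real.arcsin (φ x))
          - a * Real.sin (Real.arcsin (φ x)) ^ 3 * Real.cos (Real.arcsin (φ x)) = 0) := by
  have hφ1 : Differentiable ℝ φ := hφ.differentiable (by norm_num)
  have hφ' : ContDiff ℝ 1 (fderiv ℝ φ) := hφ.fderiv_right (by norm_num)
  have hpd : ∀ i : Fin d, Differentiable ℝ (pd i φ) := fun i =>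
    (hφ'.differentiable (by norm_num)).clm_apply (differentiable_const _)
  have hlt : ∀ x, φ x ^ 2 < 1 := fun x => by nlinarith [(hrange x).1, (hrange x).2]
  have hposq : ∀ x, 0 < 1 - φ x ^ 2 := fun x => by linarith [hlt x]
  have hspos : ∀ x, 0 < Real.sqrt (1 - φ x ^ 2) := fun x => Real.sqrt_pos.2 (hposq x)
  have hs2 : ∀ x, Real.sqrt (1 - φ x ^ 2) ^ 2 = 1 - φ x ^ 2 := fun x =>
    Real.sq_sqrt (hposq x).le
  -- derivative of the denominator `1 - φ ^ 2`
  have hq : ∀ x, HasFDerivAt (fun y => 1 - φ y ^ 2)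
      ((-(2 * φ x)) • fderiv ℝ φ x) x := by
    intro x
    have h := ((hφ1 x).hasFDerivAt.mul (hφ1 x).hasFDerivAt).const_sub 1
    simp only [← pow_two] at h
    refine h.congr_fderiv ?_
    module
  -- derivative of `√(1 - φ ^ 2)`
  have hsq : ∀ x, HasFDerivAt (fun y => Real.sqrt (1 - φ y ^ 2))
      ((-(φ x) / Real.sqrt (1 - φ x ^ 2)) • fderiv ℝ φ x) x := by
    intro x
    have h := (Real.hasDerivAt_sqrt (ne_of_gt (hposq x))).comp_hasFDerivAt x (hq x)
    refine h.congr_fderiv ?_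
    rw [smul_smul]
    congr 1
    field_simp
  -- derivative of `arcsin ∘ φ`
  have hu : ∀ x, HasFDerivAt (fun y => Real.arcsin (φ y))
      ((1 / Real.sqrt (1 - φ x ^ 2)) • fderiv ℝ φ x) x := by
    intro x
    have h1 : φ x ≠ -1 := by have := (hrange x).1; intro h; rw [h] at this; norm_num at this
    have h2 : φ x ≠ 1 := ne_of_lt (hrange x).2
    exact (Real.hasDerivAt_arcsin h1 h2).comp_hasFDerivAt x (hφ1 x).hasFDerivAt
  -- first derivative of u in coordinates
  have hpdu : ∀ (i : Fin d), (fun y => pd i (fun z => Real.arcsin (φ z)) y)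
      = fun y => pd i φ y / Real.sqrt (1 - φ y ^ 2) := by
    intro i
    funext y
    simp only [pd, (hu y).fderiv, ContinuousLinearMap.smul_apply, smul_eq_mul]
    rw [div_eq_mul_inv]
    ring
  -- second derivative of u in coordinates
  have key2 : ∀ (i : Fin d) (x : EuclideanSpace ℝ (Fin d)),
      pd i (fun y => pd i (fun z => Real.arcsin (φ z)) y) x
      = pd i (fun y => pd i φ y) x / Real.sqrt (1 - φ x ^ 2)
        + φ x * (pd i φ x) ^ 2 / Real.sqrt (1 - φ x ^ 2) ^ 3 := by
    intro i x
    rw [hpdu i]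
    have hdiv := myHasFDerivAt_div ((hpd i) x).hasFDerivAt (hsq x)
      (ne_of_gt (hspos x))
    rw [pd, hdiv.fderiv]
    have h2 : fderiv ℝ (pd i φ) x (EuclideanSpace.single i 1)
        = pd i (fun y => pd i φ y) x := rfl
    have h3 : (fderiv ℝ φ x) (EuclideanSpace.single i 1) = pd i φ x := rfl
    simp only [ContinuousLinearMap.add_apply, ContinuousLinearMap.smul_apply,
      smul_eq_mul, h2, h3]
    have hsx := hspos x
    field_simp
  -- second derivative term in the NLS equation
  have key1 : ∀ (i : Fin d) (x : EuclideanSpace ℝ (Fin d)),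
      pd i (fun y => pd i φ y / (1 - φ y ^ 2)) x
      = pd i (fun y => pd i φ y) x / (1 - φ x ^ 2)
        + 2 * φ x * (pd i φ x) ^ 2 / (1 - φ x ^ 2) ^ 2 := by
    intro i x
    have hdiv := myHasFDerivAt_div ((hpd i) x).hasFDerivAt (hq x)
      (ne_of_gt (hposq x))
    rw [pd, hdiv.fderiv]
    have h2 : fderiv ℝ (pd i φ) x (EuclideanSpace.single i 1)
        = pd i (fun y => pd i φ y) x := rfl
    have h3 : (fderiv ℝ φ x) (EuclideanSpace.single i 1) = pd i φ x := rfl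
    simp only [ContinuousLinearMap.add_apply, ContinuousLinearMap.smul_apply,
      smul_eq_mul, h2, h3]
    have := hposq x
    field_simp
  have hsin : ∀ x, Real.sin (Real.arcsin (φ x)) = φ x := fun x =>
    Real.sin_arcsin (by linarith [(hrange x).1]) (le_of_lt (hrange x).2)
  have hcos : ∀ x, Real.cos (Real.arcsin (φ x)) = Real.sqrt (1 - φ x ^ 2) := fun x =>
    Real.cos_arcsin _
  have hlap : ∀ x, lap (fun y => Real.arcsin (φ y)) x
      = (∑ i, pd i (fun y => pd i φ y) x) / Real.sqrt (1 - φ x ^ 2)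
        + φ x * (∑ i, (pd i φ x) ^ 2) / Real.sqrt (1 - φ x ^ 2) ^ 3 := by
    intro x
    rw [lap, Finset.sum_congr rfl (fun i _ => key2 i x), Finset.sum_add_distrib,
      ← Finset.sum_div, ← Finset.sum_div, ← Finset.mul_sum]
  have hnls : ∀ x, (∑ i, pd i (fun y => pd i φ y / (1 - φ y ^ 2)) x)
      = (∑ i, pd i (fun y => pd i φ y) x) / (1 - φ x ^ 2)
        + 2 * φ x * (∑ i, (pd i φ x) ^ 2) / (1 - φ x ^ 2) ^ 2 := by
    intro x
    rw [Finset.sum_congr rfl (fun i _ => key1 i x), Finset.sum_add_distrib,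
      ← Finset.sum_div, ← Finset.sum_div, ← Finset.mul_sum]
  constructor
  · intro H x
    have hx := H x
    set A := ∑ i, pd i (fun y => pd i φ y) x with hA
    set B := ∑ i, (pd i φ x) ^ 2 with hB
    set p := φ x with hp
    set s := Real.sqrt (1 - p ^ 2) with hsdef
    have hsx : 0 < s := hspos x
    have hsq2 : s ^ 2 = 1 - p ^ 2 := hs2 x
    rw [hlap x, hsin x, hcos x, ← hsdef]
    rw [hnls x] at hx
    have hx' : -(A / s ^ 2 + 2 * p * B / (s ^ 2) ^ 2) + B / (s ^ 2) ^ 2 * p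
        - a * p ^ 3 + b * p = 0 := by rw [hsq2]; exact hx
    have hsne : s ≠ 0 := ne_of_gt hsx
    have key : -(A / s + p * B / s ^ 3) + b * p * s - a * p ^ 3 * s
        = s * (-(A / s ^ 2 + 2 * p * B / (s ^ 2) ^ 2) + B / (s ^ 2) ^ 2 * p
            - a * p ^ 3 + b * p) := by
      field_simp
      ring
    calc -(A / s + p * B / s ^ 3) + b * p * s - a * p ^ 3 * s
        = s * (-(A / s ^ 2 + 2 * p * B / (s ^ 2) ^ 2) + B / (s ^ 2) ^ 2 * p
            - a * p ^ 3 + b * p) := key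
      _ = 0 := by rw [hx', mul_zero]
  · intro H x
    have hx := H x
    set A := ∑ i, pd i (fun y => pd i φ y) x with hA
    set B := ∑ i, (pd i φ x) ^ 2 with hB
    set p := φ x with hp
    set s := Real.sqrt (1 - p ^ 2) with hsdef
    have hsx : 0 < s := hspos x
    have hsq2 : s ^ 2 = 1 - p ^ 2 := hs2 x
    rw [hnls x, ← hsq2]
    rw [hlap x, hsin x, hcos x, ← hsdef] at hx
    have hsne : s ≠ 0 := ne_of_gt hsx
    have key : -(A / s + p * B / s ^ 3) + b * p * s - a * p ^ 3 * s
        = s * (-(A / s ^ 2 + 2 * p * B / (s ^ 2) ^ 2) + B / (s ^ 2) ^ 2 * p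
            - a * p ^ 3 + b * p) := by
      field_simp
      ring
    have hx0 : s * (-(A / s ^ 2 + 2 * p * B / (s ^ 2) ^ 2) + B / (s ^ 2) ^ 2 * p
        - a * p ^ 3 + b * p) = 0 := key ▸ hx
    have := (mul_eq_zero.mp hx0).resolve_left hsne
    linarith [this]
end
end

section
/- Let d ≥ 1 and let a, b satisfy 0 < a ≤ 2b. If u : [0,∞) → ℝ is a solution of the radial ODE u'' + ((d−1)/r)u' + F(u) = 0 with u'(0) = 0, u(0) ∈ [0, π/2], and (u(r), u'(r)) → (0, 0) as r → ∞, then u ≡ 0. -/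
open Real Filter

noncomputable section

/-- The nonlinearity `F(x) = (a/2)·sin(2x)·(sin²x − b/a)`. -/
def Fnl (a b x : ℝ) : ℝ := (a / 2) * Real.sin (2 * x) * (Real.sin x ^ 2 - b / a)

/-- `u` solves the radial ODE `u'' + ((d−1)/r)u' + F(u) = 0` on `(0,∞)` with `u'(0) = 0`. -/
def IsRadialSol (d : ℕ) (a b : ℝ) (u : ℝ → ℝ) : Prop :=
  ContDiff ℝ 2 u ∧ deriv u 0 = 0 ∧
  ∀ r : ℝ, 0 < r →
    deriv (deriv u) r + (((d : ℝ) - 1) / r) * deriv u r + Fnl a b (u r) = 0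

/-- The potential `G(x) = (a/4) sin⁴ x − (b/2) sin² x`, an antiderivative of `Fnl`. -/
def Gpot (a b x : ℝ) : ℝ := a / 4 * Real.sin x ^ 4 - b / 2 * Real.sin x ^ 2

lemma hasDerivAt_Gpot (a b : ℝ) (ha : a ≠ 0) (x : ℝ) :
    HasDerivAt (Gpot a b) (Fnl a b x) x := by
  have hs := Real.hasDerivAt_sin x
  have h4 : HasDerivAt (fun y => Real.sin y ^ 4) (4 * Real.sin x ^ 3 * Real.cos x) x := by
    simpa [mul_comm, mul_assoc, mul_left_comm] using hs.fun_pow 4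
  have h2 : HasDerivAt (fun y => Real.sin y ^ 2) (2 * Real.sin x * Real.cos x) x := by
    simpa [mul_comm, mul_assoc, mul_left_comm] using hs.fun_pow 2
  have h := (h4.const_mul (a / 4)).sub (h2.const_mul (b / 2))
  refine h.congr_deriv ?_
  unfold Fnl
  rw [Real.sin_two_mul]
  field_simp

lemma continuous_Fnl (a b : ℝ) : Continuous (Fnl a b) := by
  unfold Fnl; fun_prop

lemma hasDerivAt_Fnl (a b : ℝ) (ha : a ≠ 0) (x : ℝ) :
    HasDerivAt (Fnl a b)
      (Real.cos (2 * x) * (a * Real.sin x ^ 2 - b) +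
        (a / 2) * Real.sin (2 * x) ^ 2) x := by
  have h2x : HasDerivAt (fun y : ℝ => 2 * y) 2 x := by
    simpa using (hasDerivAt_id x).const_mul 2
  have hsin2 : HasDerivAt (fun y => Real.sin (2 * y)) (Real.cos (2 * x) * 2) x :=
    (Real.hasDerivAt_sin (2 * x)).comp x h2x
  have hf : HasDerivAt (fun y => (a / 2) * Real.sin (2 * y)) ((a / 2) * (Real.cos (2 * x) * 2)) x :=
    hsin2.const_mul (a / 2)
  have hg : HasDerivAt (fun y => Real.sin y ^ 2 - b / a)
      (2 * Real.sin x * Real.cos x) x := by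
    simpa [mul_comm, mul_assoc, mul_left_comm] using ((Real.hasDerivAt_sin x).pow 2).sub_const (b / a)
  have h := hf.fun_mul hg
  refine h.congr_deriv ?_
  rw [Real.sin_two_mul]
  field_simp

lemma lipschitz_Fnl (a b : ℝ) (ha : 0 < a) (hab : a ≤ 2 * b) :
    LipschitzWith ⟨2 * a + 2 * b, by nlinarith⟩ (Fnl a b) := by
  have hb : 0 < b := by linarith
  apply lipschitzWith_of_nnnorm_deriv_le
    (fun x => (hasDerivAt_Fnl a b ha.ne' x).differentiableAt)
  intro x
  rw [(hasDerivAt_Fnl a b ha.ne' x).deriv]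
  apply NNReal.coe_le_coe.mp
  rw [coe_nnnorm, Real.norm_eq_abs]
  have h1 := Real.neg_one_le_cos (2 * x)
  have h2 := Real.cos_le_one (2 * x)
  have h3 := Real.sin_sq_le_one x
  have h4 := Real.sin_sq_le_one (2 * x)
  have h5 := sq_nonneg (Real.sin x)
  have h6 := sq_nonneg (Real.sin (2 * x))
  have : |Real.cos (2 * x) * (a * Real.sin x ^ 2 - b) + a / 2 * Real.sin (2 * x) ^ 2|
      ≤ 2 * a + 2 * b := by
    rw [abs_le]
    constructor <;> nlinarith [mul_le_mul_of_nonneg_right h2 (sq_nonneg (Real.sin x)),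
      mul_le_mul_of_nonneg_left h3 ha.le]
  exact this

theorem no_nontrivial_solution_subcritical (d : ℕ) (hd : 1 ≤ d) (a b : ℝ)
    (ha : 0 < a) (hab : a ≤ 2 * b)
    (u : ℝ → ℝ) (hu : IsRadialSol d a b u)
    (h0 : u 0 ∈ Set.Icc 0 (Real.pi / 2))
    (hlim : Tendsto u atTop (nhds 0))
    (hlim' : Tendsto (deriv u) atTop (nhds 0)) :
    ∀ r : ℝ, 0 ≤ r → u r = 0 := by
  obtain ⟨hC2, hp0, hode⟩ := hu
  have hb : 0 < b := by linarith
  have hud : Differentiable ℝ u := hC2.differentiable (by norm_num)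
  have hC1d : ContDiff ℝ 1 (deriv u) := by
    have : ContDiff ℝ (1 + 1 : ℕ) u := by exact_mod_cast hC2
    exact (contDiff_succ_iff_deriv.mp (by exact_mod_cast this)).2.2
  have hudd : Differentiable ℝ (deriv u) := hC1d.differentiable one_ne_zero
  have hucdd : Continuous (deriv (deriv u)) :=
    ((contDiff_one_iff_deriv.mp hC1d).2)
  -- the energy
  set E : ℝ → ℝ := fun r => (deriv u r) ^ 2 / 2 + Gpot a b (u r) with hEdef
  have hE : ∀ r, HasDerivAt E
      (deriv u r * deriv (deriv u) r + Fnl a b (u r) * deriv u r) r := by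
    intro r
    have h1 : HasDerivAt (fun s => (deriv u s) ^ 2 / 2)
        (deriv u r * deriv (deriv u) r) r := by
      have := ((hudd r).hasDerivAt.fun_pow 2).div_const 2
      refine this.congr_deriv ?_
      ring
    have h2 : HasDerivAt (fun s => Gpot a b (u s)) (Fnl a b (u r) * deriv u r) r :=
      (hasDerivAt_Gpot a b ha.ne' (u r)).comp r (hud r).hasDerivAt
    exact h1.add h2
  have hEdiff : Differentiable ℝ E := fun r => (hE r).differentiableAt
  -- E is antitone on [0,∞)
  have hder_nonpos : ∀ x : ℝ, 0 < x →
      deriv u x * deriv (deriv u) x + Fnl a b (u x) * deriv u x ≤ 0 := by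
    intro x hx
    have h := hode x hx
    have hc : (0:ℝ) ≤ ((d : ℝ) - 1) / x := by
      apply div_nonneg _ hx.le
      have : (1 : ℝ) ≤ (d : ℝ) := by exact_mod_cast hd
      linarith
    have hF : Fnl a b (u x) = -deriv (deriv u) x - ((d : ℝ) - 1) / x * deriv u x := by
      linarith
    rw [hF]
    nlinarith [mul_nonneg hc (sq_nonneg (deriv u x))]
  have hEanti : AntitoneOn E (Set.Ici (0:ℝ)) := by
    apply antitoneOn_of_deriv_nonpos (convex_Ici 0) hEdiff.continuous.continuousOn
      (hEdiff.differentiableOn)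
    intro x hx
    rw [interior_Ici] at hx
    rw [(hE x).deriv]
    exact hder_nonpos x hx
  -- E tends to 0 at infinity
  have hEtend : Tendsto E atTop (nhds 0) := by
    have h1 : Tendsto (fun r => (deriv u r) ^ 2 / 2) atTop (nhds 0) := by
      have := (hlim'.pow 2).div_const 2
      simpa using this
    have hGc : Continuous (Gpot a b) := by unfold Gpot; fun_prop
    have h2 : Tendsto (fun r => Gpot a b (u r)) atTop (nhds (Gpot a b 0)) :=
      (hGc.tendsto 0).comp hlim
    have hG0 : Gpot a b 0 = 0 := by simp [Gpot]
    rw [hG0] at h2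
    simpa using h1.add h2
  -- E is nonnegative on [0,∞)
  have hEnonneg : ∀ r : ℝ, 0 ≤ r → 0 ≤ E r := by
    intro r hr
    apply le_of_tendsto hEtend
    filter_upwards [eventually_ge_atTop r] with s hs
    exact hEanti hr (le_trans hr hs) hs
  -- G ≤ 0 everywhere
  have hGle : ∀ x : ℝ, Gpot a b x ≤ 0 := by
    intro x
    have h3 := Real.sin_sq_le_one x
    have h5 := sq_nonneg (Real.sin x)
    unfold Gpot
    nlinarith [mul_nonneg h5 (sub_nonneg.2 h3)]
  -- E 0 = 0, G(u 0) = 0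
  have hE0 : E 0 = 0 := by
    have h1 : E 0 ≤ 0 := by
      have : E 0 = Gpot a b (u 0) := by simp [hEdef, hp0]
      rw [this]; exact hGle (u 0)
    exact le_antisymm h1 (hEnonneg 0 le_rfl)
  have hGu0 : Gpot a b (u 0) = 0 := by
    have : E 0 = Gpot a b (u 0) := by simp [hEdef, hp0]
    linarith [hE0, this.symm.le, this.le]
  have hEzero : ∀ r : ℝ, 0 ≤ r → E r = 0 := by
    intro r hr
    exact le_antisymm (hE0 ▸ hEanti (Set.self_mem_Ici) hr hr) (hEnonneg r hr)
  -- In both cases we show u is constant on [0,∞)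
  have hconst : ∀ r : ℝ, 0 ≤ r → u r = u 0 := by
    rcases Nat.lt_or_ge d 2 with hd1 | hd2
    · -- d = 1 : use ODE uniqueness after showing Fnl a b (u 0) = 0
      have hd1 : d = 1 := by omega
      subst hd1
      -- F (u 0) = 0
      have hsc : Real.sin (u 0) * Real.cos (u 0) = 0 := by
        by_cases hs : Real.sin (u 0) = 0
        · simp [hs]
        · have hsp : 0 < Real.sin (u 0) ^ 2 := by positivity
          have h3 := Real.sin_sq_le_one (u 0)
          have hs2 : Real.sin (u 0) ^ 2 = 1 := by
            have hg : a / 4 * Real.sin (u 0) ^ 4 - b / 2 * Real.sin (u 0) ^ 2 = 0 := hGu0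
            have h' : (a / 4 * Real.sin (u 0) ^ 2 - b / 2) * Real.sin (u 0) ^ 2 = 0 := by
              nlinarith [hg]
            have key : a / 4 * Real.sin (u 0) ^ 2 = b / 2 := by
              rcases mul_eq_zero.mp h' with h'' | h''
              · linarith
              · exact absurd h'' hsp.ne'
            have hge : 1 ≤ Real.sin (u 0) ^ 2 := by nlinarith
            linarith
          have hc2 : Real.cos (u 0) ^ 2 = 0 := by
            have := Real.sin_sq_add_cos_sq (u 0)
            linarith
          have : Real.cos (u 0) = 0 := by
            nlinarith [sq_nonneg (Real.cos (u 0))]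
          simp [this]
      have hFu0 : Fnl a b (u 0) = 0 := by
        have hsin2 : Real.sin (2 * u 0) = 0 := by
          rw [Real.sin_two_mul, mul_assoc, hsc, mul_zero]
        simp [Fnl, hsin2]
      -- the second-order equation holds at every t ≥ 0
      have heq : ∀ t : ℝ, 0 ≤ t → deriv (deriv u) t = -Fnl a b (u t) := by
        intro t ht
        rcases ht.eq_or_lt with h | h
        · -- continuity at 0
          subst h
          set g : ℝ → ℝ := fun s => deriv (deriv u) s + Fnl a b (u s) with hgdef
          have hgc : Continuous g := hucdd.add ((continuous_Fnl a b).comp hud.continuous)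
          have hgz : ∀ s : ℝ, 0 < s → g s = 0 := by
            intro s hs
            have := hode s hs
            norm_num at this
            simp only [hgdef]
            linarith
          have h1 : Tendsto g (nhdsWithin 0 (Set.Ioi 0)) (nhds (g 0)) :=
            (hgc.tendsto 0).mono_left nhdsWithin_le_nhds
          have h2 : Tendsto g (nhdsWithin 0 (Set.Ioi 0)) (nhds 0) := by
            apply Tendsto.congr' _ (tendsto_const_nhds (α := ℝ) (x := 0))
            filter_upwards [self_mem_nhdsWithin] with s hs
            exact (hgz s hs).symm
          have : g 0 = 0 := tendsto_nhds_unique h1 h2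
          simp only [hgdef] at this
          linarith
        · have := hode t h
          simp only [Nat.cast_one] at this
          have hz : ((1:ℝ) - 1) / t = 0 := by norm_num
          rw [hz] at this
          linarith
      -- set up the first-order system
      intro r hr
      set V : ℝ → ℝ × ℝ → ℝ × ℝ := fun _ p => (p.2, -Fnl a b p.1) with hVdef
      obtain ⟨K, hVlip⟩ : ∃ K : NNReal, ∀ t, LipschitzWith K (V t) :=
        ⟨_, fun _ => LipschitzWith.prod_snd.prodMk
          (((lipschitz_Fnl a b ha hab).comp (LipschitzWith.prod_fst)).neg)⟩
      set f : ℝ → ℝ × ℝ := fun t => (u t, deriv u t) with hfdef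
      set g : ℝ → ℝ × ℝ := fun _ => (u 0, 0) with hgdef
      have hf' : ∀ t ∈ Set.Ico (0:ℝ) r, HasDerivWithinAt f (V t (f t)) (Set.Ici t) t := by
        intro t ht
        have h1 : HasDerivAt f (deriv u t, deriv (deriv u) t) t :=
          ((hud t).hasDerivAt).prodMk ((hudd t).hasDerivAt)
        have h2 : V t (f t) = (deriv u t, deriv (deriv u) t) := by
          simp only [hVdef, hfdef]
          rw [heq t ht.1]
        rw [h2]
        exact h1.hasDerivWithinAt
      have hg' : ∀ t ∈ Set.Ico (0:ℝ) r, HasDerivWithinAt g (V t (g t)) (Set.Ici t) t := by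
        intro t _
        have h2 : V t (g t) = (0, 0) := by
          simp [hVdef, hgdef, hFu0]
        rw [h2]
        exact (hasDerivAt_const t ((u 0, 0) : ℝ × ℝ)).hasDerivWithinAt
      have hcont_f : ContinuousOn f (Set.Icc 0 r) :=
        ((hud.continuous).prodMk (hudd.continuous)).continuousOn
      have hcont_g : ContinuousOn g (Set.Icc 0 r) := continuousOn_const
      have hinit : f 0 = g 0 := by
        simp [hfdef, hgdef, hp0]
      have := ODE_solution_unique hVlip hcont_f hf' hcont_g hg' hinit
        (Set.mem_Icc.mpr ⟨hr, le_rfl⟩)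
      have h2 : f r = g r := this
      exact (Prod.ext_iff.mp h2).1
    · -- d ≥ 2 : E ≡ 0 forces deriv u ≡ 0
      have hderiv0 : ∀ x : ℝ, 0 ≤ x → deriv u x = 0 := by
        intro x hx
        rcases hx.eq_or_lt with h | h
        · rw [← h]; exact hp0
        · have hev : E =ᶠ[nhds x] fun _ => 0 := by
            filter_upwards [Ioi_mem_nhds h] with y hy
            exact hEzero y (le_of_lt hy)
          have hdE : deriv E x = 0 := by
            rw [hev.deriv_eq]; simp
          rw [(hE x).deriv] at hdE
          have hode' := hode x h
          have hc : (0:ℝ) < ((d : ℝ) - 1) / x := by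
            apply div_pos _ h
            have : (2 : ℝ) ≤ (d : ℝ) := by exact_mod_cast hd2
            linarith
          have hF : Fnl a b (u x) = -deriv (deriv u) x - ((d : ℝ) - 1) / x * deriv u x := by
            linarith
          rw [hF] at hdE
          have hsq : ((d : ℝ) - 1) / x * (deriv u x) ^ 2 = 0 := by nlinarith
          have : (deriv u x) ^ 2 = 0 :=
            (mul_eq_zero.mp hsq).resolve_left hc.ne'
          exact pow_eq_zero_iff (n := 2) (by norm_num) |>.mp this
      intro r hr
      have := constant_of_has_deriv_right_zero (f := u) (a := 0) (b := r)
        hud.continuous.continuousOn ?_ r (Set.mem_Icc.mpr ⟨hr, le_rfl⟩)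
      · exact this
      · intro x hx
        have : HasDerivAt u 0 x := by
          have h := (hud x).hasDerivAt
          rwa [hderiv0 x hx.1] at h
        exact this.hasDerivWithinAt
  -- conclude: u 0 = 0 from the limit
  have hu0 : u 0 = 0 := by
    have h1 : Tendsto u atTop (nhds (u 0)) := by
      apply Tendsto.congr' _ (tendsto_const_nhds (α := ℝ) (x := u 0))
      filter_upwards [eventually_ge_atTop (0:ℝ)] with s hs
      exact (hconst s hs).symm
    exact tendsto_nhds_unique h1 hlim
  intro r hr
  rw [hconst r hr, hu0]
end
end

section
/- Let a > 2b > 0 and define F(x) := (a/2)·sin(2x)·(sin²(x) − b/a). Then the function x ↦ x·F'(x)/F(x) is strictly decreasing on the interval (arcsin(√(b/a)), π/2). -/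
open Real

noncomputable section

theorem xFprime_div_F_strictAnti (a b : ℝ) (hb : 0 < b) (hab : 2 * b < a) :
    StrictAntiOn (fun x : ℝ => x * deriv (Fnl a b) x / Fnl a b x)
      (Set.Ioo (Real.arcsin (Real.sqrt (b / a))) (Real.pi / 2)) := by
  have ha : 0 < a := by linarith
  set x₀ := Real.arcsin (Real.sqrt (b / a)) with hx₀def
  have hx₀0 : 0 ≤ x₀ := Real.arcsin_nonneg.2 (Real.sqrt_nonneg _)
  have hba0 : 0 ≤ b / a := le_of_lt (div_pos hb ha)
  have hba1 : b / a < 1 := (div_lt_one ha).2 (by linarith)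
  -- basic facts on the set
  have hfacts : ∀ x ∈ Set.Ioo x₀ (Real.pi / 2),
      0 < x ∧ 0 < Real.sin x ∧ 0 < Real.cos x ∧ b < a * Real.sin x ^ 2 := by
    intro x hx
    obtain ⟨hx1, hx2⟩ := hx
    have hxpos : 0 < x := lt_of_le_of_lt hx₀0 hx1
    have hcos : 0 < Real.cos x :=
      Real.cos_pos_of_mem_Ioo ⟨by linarith [Real.pi_pos], hx2⟩
    have hsx0 : Real.sin x₀ = Real.sqrt (b / a) :=
      Real.sin_arcsin (by linarith [Real.sqrt_nonneg (b / a)])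
        (Real.sqrt_le_one.2 hba1.le)
    have hsinlt : Real.sqrt (b / a) < Real.sin x := by
      have hmono := Real.strictMonoOn_sin (a := x₀) (b := x)
        ⟨by linarith [Real.pi_pos], by
          linarith [Real.arcsin_le_pi_div_two (Real.sqrt (b / a))]⟩
        ⟨by linarith [Real.pi_pos], hx2.le⟩ hx1
      rwa [hsx0] at hmono
    have hsin : 0 < Real.sin x := lt_of_le_of_lt (Real.sqrt_nonneg _) hsinlt
    have hD : b < a * Real.sin x ^ 2 := by
      have h1 : b / a < Real.sin x ^ 2 := by
        nlinarith [Real.sq_sqrt hba0, Real.sqrt_nonneg (b / a)]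
      calc b = a * (b / a) := by field_simp
        _ < a * Real.sin x ^ 2 := by nlinarith
    exact ⟨hxpos, hsin, hcos, hD⟩
  -- the surrogate function
  set g : ℝ → ℝ := fun x => x * Real.cos x / Real.sin x - x * Real.sin x / Real.cos x
      + a * x * (2 * Real.sin x * Real.cos x) / (a * Real.sin x ^ 2 - b) with hgdef
  -- derivative of g on the set
  have hgderiv : ∀ x ∈ Set.Ioo x₀ (Real.pi / 2), HasDerivAt g
      ((Real.sin x * Real.cos x - x) / Real.sin x ^ 2
        - (Real.sin x * Real.cos x + x) / Real.cos x ^ 2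
        + (2 * a * ((a - b) * Real.sin x ^ 2 * (Real.sin x * Real.cos x - x)
            - b * Real.cos x ^ 2 * (Real.sin x * Real.cos x + x)))
          / (a * Real.sin x ^ 2 - b) ^ 2) x := by
    intro x hx
    obtain ⟨hxpos, hsin, hcos, hD⟩ := hfacts x hx
    have hpyth := Real.sin_sq_add_cos_sq x
    have hDne : a * Real.sin x ^ 2 - b ≠ 0 := by nlinarith
    have h1 : HasDerivAt (fun y => y * Real.cos y / Real.sin y)
        ((Real.sin x * Real.cos x - x) / Real.sin x ^ 2) x := by
      have h := ((hasDerivAt_id x).fun_mul (Real.hasDerivAt_cos x)).fun_div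
        (Real.hasDerivAt_sin x) hsin.ne'
      simp only [id_eq] at h
      refine h.congr_deriv (Eq.symm ?_)
      rw [div_eq_div_iff (by positivity) (by positivity)]
      linear_combination (x * Real.sin x ^ 2) * hpyth
    have h2 : HasDerivAt (fun y => y * Real.sin y / Real.cos y)
        ((Real.sin x * Real.cos x + x) / Real.cos x ^ 2) x := by
      have h := ((hasDerivAt_id x).fun_mul (Real.hasDerivAt_sin x)).fun_div
        (Real.hasDerivAt_cos x) hcos.ne'
      simp only [id_eq] at h
      refine h.congr_deriv (Eq.symm ?_)
      rw [div_eq_div_iff (by positivity) (by positivity)]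
      linear_combination (-(x * Real.cos x ^ 2)) * hpyth
    have h3 : HasDerivAt (fun y => a * y * (2 * Real.sin y * Real.cos y) /
        (a * Real.sin y ^ 2 - b))
        ((2 * a * ((a - b) * Real.sin x ^ 2 * (Real.sin x * Real.cos x - x)
            - b * Real.cos x ^ 2 * (Real.sin x * Real.cos x + x)))
          / (a * Real.sin x ^ 2 - b) ^ 2) x := by
      have hn : HasDerivAt (fun y => a * y * (2 * Real.sin y * Real.cos y))
          ((a * 1) * (2 * Real.sin x * Real.cos x)
            + (a * x) * ((2 * Real.cos x) * Real.cos x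
              + (2 * Real.sin x) * (-Real.sin x))) x := by
        have h := (((hasDerivAt_id x).const_mul a).fun_mul
          (((Real.hasDerivAt_sin x).const_mul 2).fun_mul (Real.hasDerivAt_cos x)))
        simpa using h
      have hd : HasDerivAt (fun y => a * Real.sin y ^ 2 - b)
          (a * (2 * Real.sin x ^ 1 * Real.cos x)) x := by
        have h := (((Real.hasDerivAt_sin x).pow 2).const_mul a).sub_const b
        simpa using h
      have h := hn.fun_div hd hDne
      refine h.congr_deriv (Eq.symm ?_)
      rw [div_eq_div_iff (by positivity) (by positivity)]
      linear_combination (2 * a * Real.sin x * (a * x * Real.sin x - b * Real.cos x)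
        * (a * Real.sin x ^ 2 - b) ^ 2) * hpyth
    exact (h1.sub h2).add h3
  -- the derivative of g is negative on the set
  have hgneg : ∀ x ∈ Set.Ioo x₀ (Real.pi / 2), deriv g x < 0 := by
    intro x hx
    obtain ⟨hxpos, hsin, hcos, hD⟩ := hfacts x hx
    rw [(hgderiv x hx).deriv]
    have hsclt : Real.sin x * Real.cos x < x := by
      nlinarith [Real.sin_lt hxpos, Real.cos_le_one x]
    have p1 : (Real.sin x * Real.cos x - x) / Real.sin x ^ 2 < 0 :=
      div_neg_of_neg_of_pos (by linarith) (by positivity)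
    have p2 : 0 < (Real.sin x * Real.cos x + x) / Real.cos x ^ 2 := by positivity
    have p3 : (2 * a * ((a - b) * Real.sin x ^ 2 * (Real.sin x * Real.cos x - x)
            - b * Real.cos x ^ 2 * (Real.sin x * Real.cos x + x)))
          / (a * Real.sin x ^ 2 - b) ^ 2 < 0 := by
      apply div_neg_of_neg_of_pos
      · have h31 : (a - b) * Real.sin x ^ 2 * (Real.sin x * Real.cos x - x) < 0 :=
          mul_neg_of_pos_of_neg (mul_pos (by linarith) (by positivity)) (by linarith)
        have h32 : 0 < b * Real.cos x ^ 2 * (Real.sin x * Real.cos x + x) := by positivity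
        nlinarith
      · have : 0 < a * Real.sin x ^ 2 - b := by linarith
        positivity
    linarith
  -- g is strictly antitone
  have hganti : StrictAntiOn g (Set.Ioo x₀ (Real.pi / 2)) := by
    apply strictAntiOn_of_deriv_neg (convex_Ioo _ _)
    · exact fun x hx => (hgderiv x hx).continuousAt.continuousWithinAt
    · intro x hx
      rw [interior_Ioo] at hx
      exact hgneg x hx
  -- rewrite Fnl as a clean product
  have hFeq : Fnl a b = fun y => Real.sin y * Real.cos y * (a * Real.sin y ^ 2 - b) := by
    funext y
    show (a / 2) * Real.sin (2 * y) * (Real.sin y ^ 2 - b / a) = _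
    rw [Real.sin_two_mul]
    field_simp
  -- the target function coincides with g on the set
  have heq : ∀ x ∈ Set.Ioo x₀ (Real.pi / 2),
      x * deriv (Fnl a b) x / Fnl a b x = g x := by
    intro x hx
    obtain ⟨hxpos, hsin, hcos, hD⟩ := hfacts x hx
    have hDne : a * Real.sin x ^ 2 - b ≠ 0 := by nlinarith
    have hder : HasDerivAt (fun y => Real.sin y * Real.cos y * (a * Real.sin y ^ 2 - b))
        ((Real.cos x * Real.cos x + Real.sin x * (-Real.sin x))
            * (a * Real.sin x ^ 2 - b)
          + (Real.sin x * Real.cos x) * (a * (2 * Real.sin x ^ 1 * Real.cos x))) x := by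
      have h := ((Real.hasDerivAt_sin x).fun_mul (Real.hasDerivAt_cos x)).fun_mul
        ((((Real.hasDerivAt_sin x).pow 2).const_mul a).sub_const b)
      simpa using h
    rw [hFeq, hder.deriv, hgdef]
    field_simp [hsin.ne', hcos.ne', hDne, (show 0 < Real.sin x ^ 2 * a - b by linarith).ne']
    ring
  intro x hx y hy hxy
  simp only
  rw [heq x hx, heq y hy]
  exact hganti hx hy hxy
end
end

section
/- Let a > 2b > 0, define F(x) := (a/2)·sin(2x)·(sin²(x) − b/a), and let λ > 1. Then the function I(x) := x·F'(x) − λ·F(x) has exactly one zero x* in the interval (0, π/2); this zero lies in (arcsin(√(b/a)), π/2) and satisfies I'(x*) < 0. Moreover I(x) > 0 for all x ∈ (0, arcsin(√(b/a))]. -/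
set_option maxHeartbeats 1000000

open Real

noncomputable section

/-- `I(x) = x·F'(x) − λ·F(x)`. -/
def Ifun (a b lam x : ℝ) : ℝ := x * deriv (Fnl a b) x - lam * Fnl a b x

/-- First derivative of `F`, in polynomial form in `sin² x`. -/
def Fd (a b x : ℝ) : ℝ := -4*a*(Real.sin x ^ 2)^2 + (3*a+2*b)*Real.sin x ^ 2 - b

/-- Second derivative of `F`. -/
def Fdd (a b x : ℝ) : ℝ := 2*Real.sin x*Real.cos x*(3*a+2*b-8*a*Real.sin x ^ 2)

lemma hasDerivAt_sinsq (x : ℝ) :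
    HasDerivAt (fun y => Real.sin y ^ 2) (2 * Real.sin x * Real.cos x) x := by
  simpa [mul_comm, mul_assoc] using (Real.hasDerivAt_sin x).fun_pow 2

lemma hasDerivAt_Fnl_s12 (a b x : ℝ) (ha : a ≠ 0) :
    HasDerivAt (Fnl a b) (Fd a b x) x := by
  have h1 : HasDerivAt (fun y : ℝ => Real.sin (2*y)) (2 * Real.cos (2*x)) x := by
    simpa [Function.comp_def, mul_comm] using
      (Real.hasDerivAt_sin (2*x)).comp x ((hasDerivAt_id x).const_mul 2)
  have h2 := hasDerivAt_sinsq x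
  have h : HasDerivAt (Fnl a b)
      ((a/2 * (2 * Real.cos (2*x))) * (Real.sin x ^ 2 - b/a)
        + (a/2 * Real.sin (2*x)) * (2 * Real.sin x * Real.cos x)) x :=
    (h1.const_mul (a/2)).mul (h2.sub_const (b/a))
  convert h using 1
  have hpy := Real.sin_sq_add_cos_sq x
  rw [Real.sin_two_mul, Real.cos_two_mul, Fd]
  field_simp
  linear_combination (2*b - 4*a*Real.sin x^2) * hpy

lemma hasDerivAt_Fd (a b x : ℝ) :
    HasDerivAt (Fd a b) (Fdd a b x) x := by
  have h2 := hasDerivAt_sinsq x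
  have h : HasDerivAt (Fd a b)
      (-4*a*(2*(Real.sin x ^2)^1*(2 * Real.sin x * Real.cos x))
        + (3*a+2*b)*(2 * Real.sin x * Real.cos x)) x :=
    (((h2.pow 2).const_mul (-4*a)).add (h2.const_mul (3*a+2*b))).sub_const b
  convert h using 1
  rw [Fdd]; ring

lemma Ifun_apply (a b lam x : ℝ) (ha : a ≠ 0) :
    Ifun a b lam x = x * Fd a b x - lam * Fnl a b x := by
  rw [Ifun, (hasDerivAt_Fnl_s12 a b x ha).deriv]

lemma hasDerivAt_Ifun (a b lam x : ℝ) (ha : a ≠ 0) :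
    HasDerivAt (Ifun a b lam) (Fd a b x + x * Fdd a b x - lam * Fd a b x) x := by
  have heq : Ifun a b lam = fun y => y * Fd a b y - lam * Fnl a b y :=
    funext fun y => Ifun_apply a b lam y ha
  rw [heq]
  have h : HasDerivAt (fun y => y * Fd a b y - lam * Fnl a b y)
      ((1 * Fd a b x + x * Fdd a b x) - lam * Fd a b x) x :=
    ((hasDerivAt_id x).mul (hasDerivAt_Fd a b x)).sub
      ((hasDerivAt_Fnl_s12 a b x ha).const_mul lam)
  simpa using h

lemma Fnl_eq (a b x : ℝ) (ha : a ≠ 0) :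
    Fnl a b x = Real.sin x * Real.cos x * (a * Real.sin x ^ 2 - b) := by
  rw [Fnl, Real.sin_two_mul]; field_simp

lemma continuous_Ifun (a b lam : ℝ) (ha : a ≠ 0) : Continuous (Ifun a b lam) := by
  have : Differentiable ℝ (Ifun a b lam) :=
    fun x => (hasDerivAt_Ifun a b lam x ha).differentiableAt
  exact this.continuous

/-- The key inequality `ψ(x) = F·F' + x·(F·F'' − F'²) < 0` past the sign change of `F`. -/
lemma psi_neg (a b x : ℝ) (hb : 0 < b) (hab : 2*b < a)
    (hx1 : 0 < x) (hx2 : x < π/2) (hsx : b < a * Real.sin x ^ 2) :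
    Fnl a b x * Fd a b x + x * (Fnl a b x * Fdd a b x - Fd a b x ^ 2) < 0 := by
  have ha : (0:ℝ) < a := by linarith
  rw [Fnl_eq a b x (ne_of_gt ha), Fd, Fdd]
  have hsi : 0 < Real.sin x := Real.sin_pos_of_pos_of_lt_pi hx1 (by linarith [Real.pi_pos])
  have hco : 0 < Real.cos x := Real.cos_pos_of_mem_Ioo ⟨by linarith [Real.pi_pos], hx2⟩
  have hx : Real.sin x < x := Real.sin_lt hx1
  set si := Real.sin x with hsidef
  set co := Real.cos x with hcodef
  have hpy : si^2 + co^2 = 1 := Real.sin_sq_add_cos_sq x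
  set s := si^2 with hsdef
  have hs0 : 0 < s := pow_pos hsi 2
  have hs1 : s < 1 := by nlinarith [sq_nonneg co]
  have hco2 : co^2 = 1 - s := by linarith
  have hu : 0 < a*s - b := by linarith
  have hx0 : 0 < x := hx1
  have hsig : si*co < x := by nlinarith [mul_pos hsi hco]
  set P := -4*a*s^2 + (3*a+2*b)*s - b with hPdef
  have hkey : (a*s-b)*P + (2*s*(1-s)*(a*s-b)*(3*a+2*b-8*a*s) - P^2)
      = -2*s*((a*s-b)^2 + 2*a*b*(1-s)^2) := by rw [hPdef]; ring
  have hC : (a*s-b)*P + (2*s*(1-s)*(a*s-b)*(3*a+2*b-8*a*s) - P^2) < 0 := by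
    rw [hkey]
    have h1 : 0 < (a*s-b)^2 + 2*a*b*(1-s)^2 := by positivity
    nlinarith
  have hgoal : (si*co*(a*s - b)) * P
      + x * ((si*co*(a*s - b)) * (2*si*co*(3*a+2*b-8*a*s)) - P^2)
      = (si*co*(a*s - b)) * P
      + x * (2*s*(1-s)*(a*s-b)*(3*a+2*b-8*a*s) - P^2) := by
    rw [hsdef]; linear_combination (x * 2 * si^2 * (a*si^2-b)*(3*a+2*b-8*a*si^2)) * hco2
  rw [hgoal]
  rcases le_or_gt P 0 with hP | hP
  · have hQ : 3*a+2*b-8*a*s < 0 := by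
      by_contra h
      push_neg at h
      nlinarith [mul_pos hs0 hb, mul_pos hs0 hu]
    have h1 : (si*co*(a*s - b)) * P ≤ 0 :=
      mul_nonpos_of_nonneg_of_nonpos
        (mul_nonneg (mul_nonneg hsi.le hco.le) hu.le) hP
    have h2 : 2*s*(1-s)*(a*s-b)*(3*a+2*b-8*a*s) < 0 := by
      have h0 : 0 < 2*s*(1-s)*(a*s-b) :=
        mul_pos (mul_pos (mul_pos two_pos hs0) (by linarith)) hu
      exact mul_neg_of_pos_of_neg h0 hQ
    have h3 : x * (2*s*(1-s)*(a*s-b)*(3*a+2*b-8*a*s) - P^2) < 0 :=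
      mul_neg_of_pos_of_neg hx0 (by nlinarith [sq_nonneg P])
    linarith
  · have h1 : (si*co*(a*s - b)) * P < x * ((a*s-b)*P) := by
      have := mul_pos hu hP
      nlinarith
    nlinarith

section Main

variable {a b lam : ℝ}

lemma theta_facts (hb : 0 < b) (hab : 2 * b < a) :
    0 < Real.arcsin (Real.sqrt (b / a)) ∧ Real.arcsin (Real.sqrt (b / a)) < π / 2 ∧
      Real.sin (Real.arcsin (Real.sqrt (b / a))) ^ 2 = b / a := by
  have ha : (0:ℝ) < a := by linarith
  have hba0 : 0 < b / a := div_pos hb ha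
  have hba1 : b / a < 1 := (div_lt_one ha).mpr (by linarith)
  have hr0 : 0 < Real.sqrt (b / a) := Real.sqrt_pos.mpr hba0
  have hr1 : Real.sqrt (b / a) < 1 := by
    rw [show (1:ℝ) = Real.sqrt 1 by simp]
    exact Real.sqrt_lt_sqrt hba0.le hba1
  refine ⟨Real.arcsin_pos.mpr hr0, Real.arcsin_lt_pi_div_two.mpr hr1, ?_⟩
  rw [Real.sin_arcsin (by linarith) hr1.le]
  exact Real.sq_sqrt hba0.le

/-- On `(0, θ]` we have `a·sin²x ≤ b`; past `θ` we have `a·sin²x > b`. -/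
lemma sin_sq_le (hb : 0 < b) (hab : 2 * b < a) {x : ℝ}
    (hx0 : 0 < x) (hx : x ≤ Real.arcsin (Real.sqrt (b / a))) :
    a * Real.sin x ^ 2 ≤ b := by
  have ha : (0:ℝ) < a := by linarith
  obtain ⟨ht0, ht2, hts⟩ := theta_facts hb hab
  have hmono : Real.sin x ≤ Real.sin (Real.arcsin (Real.sqrt (b / a))) := by
    rcases eq_or_lt_of_le hx with h | h
    · rw [h]
    · exact le_of_lt <| Real.strictMonoOn_sin ⟨by linarith, by linarith⟩
        ⟨by linarith, by linarith⟩ h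
  have hsx : 0 < Real.sin x := Real.sin_pos_of_pos_of_lt_pi hx0
    (by nlinarith [Real.pi_pos])
  have : Real.sin x ^ 2 ≤ b / a := by
    rw [← hts]; exact pow_le_pow_left₀ hsx.le hmono 2
  calc a * Real.sin x ^ 2 ≤ a * (b / a) := by nlinarith
    _ = b := by field_simp

lemma sin_sq_gt (hb : 0 < b) (hab : 2 * b < a) {x : ℝ}
    (hx : Real.arcsin (Real.sqrt (b / a)) < x) (hx2 : x < π / 2) :
    b < a * Real.sin x ^ 2 := by
  have ha : (0:ℝ) < a := by linarith
  obtain ⟨ht0, ht2, hts⟩ := theta_facts hb hab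
  have hmono : Real.sin (Real.arcsin (Real.sqrt (b / a))) < Real.sin x :=
    Real.strictMonoOn_sin ⟨by linarith, by linarith⟩ ⟨by linarith, by linarith⟩ hx
  have hba1 : b / a < 1 := (div_lt_one ha).mpr (by linarith)
  have hr1 : Real.sqrt (b / a) ≤ 1 := by
    rw [show (1:ℝ) = Real.sqrt 1 by simp]
    exact Real.sqrt_le_sqrt hba1.le
  have hts0 : 0 ≤ Real.sin (Real.arcsin (Real.sqrt (b / a))) := by
    rw [Real.sin_arcsin (by linarith [Real.sqrt_nonneg (b/a)]) hr1]
    exact Real.sqrt_nonneg _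
  have : b / a < Real.sin x ^ 2 := by
    rw [← hts]; exact pow_lt_pow_left₀ hmono hts0 (by norm_num)
  calc b = a * (b / a) := by field_simp
    _ < a * Real.sin x ^ 2 := by nlinarith

/-- Positivity of `I` on `(0, θ]`. -/
lemma Ifun_pos (hb : 0 < b) (hab : 2 * b < a) (hlam : 1 < lam) :
    ∀ x ∈ Set.Ioc (0 : ℝ) (Real.arcsin (Real.sqrt (b / a))), 0 < Ifun a b lam x := by
  have ha : (0:ℝ) < a := by linarith
  obtain ⟨ht0, ht2, hts⟩ := theta_facts hb hab
  set θ := Real.arcsin (Real.sqrt (b / a)) with hθ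
  set J : ℝ → ℝ := fun y => y * Fd a b y - Fnl a b y with hJ
  have hJd : ∀ y, HasDerivAt J (y * Fdd a b y) y := by
    intro y
    have h : HasDerivAt J ((1 * Fd a b y + y * Fdd a b y) - Fd a b y) y :=
      ((hasDerivAt_id y).mul (hasDerivAt_Fd a b y)).sub (hasDerivAt_Fnl_s12 a b y (ne_of_gt ha))
    simpa using h
  have hJmono : StrictMonoOn J (Set.Icc 0 θ) := by
    apply strictMonoOn_of_deriv_pos (convex_Icc 0 θ)
    · exact (Differentiable.continuous fun y => (hJd y).differentiableAt).continuousOn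
    · intro y hy
      rw [interior_Icc] at hy
      obtain ⟨hy1, hy2⟩ := hy
      rw [(hJd y).deriv]
      have hyp2 : y < π / 2 := lt_trans hy2 ht2
      have hsle : a * Real.sin y ^ 2 ≤ b := sin_sq_le hb hab hy1 hy2.le
      have hsy : 0 < Real.sin y := Real.sin_pos_of_pos_of_lt_pi hy1
        (by linarith [Real.pi_pos])
      have hcy : 0 < Real.cos y := Real.cos_pos_of_mem_Ioo
        ⟨by linarith [Real.pi_pos], hyp2⟩
      have : 0 < Fdd a b y := by
        rw [Fdd]
        have : 0 < 3*a+2*b-8*a*Real.sin y ^ 2 := by nlinarith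
        positivity
      exact mul_pos hy1 this
  have hJ0 : J 0 = 0 := by simp [hJ, Fnl]
  intro x hx
  obtain ⟨hx1, hx2⟩ := hx
  have hxp2 : x ≤ π / 2 := le_trans hx2 ht2.le
  have hxIcc : x ∈ Set.Icc (0:ℝ) θ := ⟨hx1.le, hx2⟩
  have hJx : 0 < J x := by
    have := hJmono (Set.left_mem_Icc.mpr ht0.le) hxIcc hx1
    rwa [hJ0] at this
  have hFle : Fnl a b x ≤ 0 := by
    rw [Fnl_eq a b x (ne_of_gt ha)]
    have hsle : a * Real.sin x ^ 2 ≤ b := sin_sq_le hb hab hx1 hx2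
    have hsy : 0 < Real.sin x := Real.sin_pos_of_pos_of_lt_pi hx1
      (by linarith [Real.pi_pos])
    have hcy : 0 ≤ Real.cos x := Real.cos_nonneg_of_mem_Icc
      ⟨by linarith [Real.pi_pos], hxp2⟩
    exact mul_nonpos_of_nonneg_of_nonpos (by positivity) (by linarith)
  rw [Ifun_apply a b lam x (ne_of_gt ha)]
  have : (lam - 1) * Fnl a b x ≤ 0 :=
    mul_nonpos_of_nonneg_of_nonpos (by linarith) hFle
  have hJx' : x * Fd a b x - Fnl a b x = J x := rfl
  nlinarith


/-- `F > 0` on `(θ, π/2)`. -/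
lemma Fnl_pos (hb : 0 < b) (hab : 2 * b < a) {x : ℝ}
    (hx : Real.arcsin (Real.sqrt (b / a)) < x) (hx2 : x < π / 2) :
    0 < Fnl a b x := by
  have ha : (0:ℝ) < a := by linarith
  obtain ⟨ht0, _, _⟩ := theta_facts hb hab
  have hx0 : 0 < x := lt_trans ht0 hx
  have hsx : 0 < Real.sin x := Real.sin_pos_of_pos_of_lt_pi hx0 (by linarith [Real.pi_pos])
  have hcx : 0 < Real.cos x := Real.cos_pos_of_mem_Ioo ⟨by linarith [Real.pi_pos], hx2⟩
  have hgt := sin_sq_gt hb hab hx hx2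
  rw [Fnl_eq a b x (ne_of_gt ha)]
  have : 0 < a * Real.sin x ^ 2 - b := by linarith
  positivity

/-- At any zero of `I` in `(θ, π/2)`, the derivative of `I` is negative. -/
lemma deriv_Ifun_neg (hb : 0 < b) (hab : 2 * b < a) (hlam : 1 < lam) {x : ℝ}
    (hx : Real.arcsin (Real.sqrt (b / a)) < x) (hx2 : x < π / 2)
    (hz : Ifun a b lam x = 0) : deriv (Ifun a b lam) x < 0 := by
  have ha : (0:ℝ) < a := by linarith
  obtain ⟨ht0, _, _⟩ := theta_facts hb hab
  have hx0 : 0 < x := lt_trans ht0 hx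
  have hF : 0 < Fnl a b x := Fnl_pos hb hab hx hx2
  have hd := (hasDerivAt_Ifun a b lam x (ne_of_gt ha)).deriv
  have heq : x * Fd a b x = lam * Fnl a b x := by
    rw [Ifun_apply a b lam x (ne_of_gt ha)] at hz; linarith
  have hψ := psi_neg a b x hb hab hx0 hx2 (sin_sq_gt hb hab hx hx2)
  have hkey : Fnl a b x * deriv (Ifun a b lam) x
      = Fnl a b x * Fd a b x + x * (Fnl a b x * Fdd a b x - Fd a b x ^ 2) := by
    rw [hd]; linear_combination (Fd a b x) * heq
  have hneg : Fnl a b x * deriv (Ifun a b lam) x < 0 := by rw [hkey]; exact hψ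
  by_contra h
  push_neg at h
  nlinarith [mul_nonneg hF.le h]

/-- From a negative derivative at a zero, values just to the left are positive. -/
lemma pos_left_of_deriv_neg {f : ℝ → ℝ} {x d : ℝ} (hf : HasDerivAt f d x) (hd : d < 0)
    (hfx : f x = 0) {c : ℝ} (hc : c < x) : ∃ y ∈ Set.Ioo c x, 0 < f y := by
  have hslope := hasDerivAt_iff_tendsto_slope.mp hf
  have hev : ∀ᶠ y in nhdsWithin x {x}ᶜ, slope f x y < 0 :=
    hslope.eventually_lt_const hd
  have hmono : nhdsWithin x (Set.Iio x) ≤ nhdsWithin x {x}ᶜ :=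
    nhdsWithin_mono x fun y hy => ne_of_lt hy
  have hev2 : ∀ᶠ y in nhdsWithin x (Set.Iio x), slope f x y < 0 := hev.filter_mono hmono
  have hmem : Set.Ioo c x ∈ nhdsWithin x (Set.Iio x) :=
    Ioo_mem_nhdsLT_of_mem ⟨hc, le_refl x⟩
  obtain ⟨y, hy1, hy2⟩ := (hev2.and (Filter.eventually_of_mem hmem fun y hy => hy)).exists
  refine ⟨y, hy2, ?_⟩
  rw [slope_def_field, hfx, sub_zero] at hy1
  have hyx : y - x < 0 := sub_neg.mpr hy2.2
  rcases div_neg_iff.mp hy1 with ⟨h1, h2⟩ | ⟨h1, h2⟩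
  · exact h1
  · linarith

/-- From a negative derivative at a zero, values just to the right are negative. -/
lemma neg_right_of_deriv_neg {f : ℝ → ℝ} {x d : ℝ} (hf : HasDerivAt f d x) (hd : d < 0)
    (hfx : f x = 0) {c : ℝ} (hc : x < c) : ∃ y ∈ Set.Ioo x c, f y < 0 := by
  have hslope := hasDerivAt_iff_tendsto_slope.mp hf
  have hev : ∀ᶠ y in nhdsWithin x {x}ᶜ, slope f x y < 0 :=
    hslope.eventually_lt_const hd
  have hmono : nhdsWithin x (Set.Ioi x) ≤ nhdsWithin x {x}ᶜ :=
    nhdsWithin_mono x fun y hy => (ne_of_gt hy)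
  have hev2 : ∀ᶠ y in nhdsWithin x (Set.Ioi x), slope f x y < 0 := hev.filter_mono hmono
  have hmem : Set.Ioo x c ∈ nhdsWithin x (Set.Ioi x) :=
    Ioo_mem_nhdsGT_of_mem ⟨le_refl x, hc⟩
  obtain ⟨y, hy1, hy2⟩ := (hev2.and (Filter.eventually_of_mem hmem fun y hy => hy)).exists
  refine ⟨y, hy2, ?_⟩
  rw [slope_def_field, hfx, sub_zero] at hy1
  have hyx : 0 < y - x := sub_pos.mpr hy2.1
  rcases div_neg_iff.mp hy1 with ⟨h1, h2⟩ | ⟨h1, h2⟩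
  · linarith
  · exact h1


/-- No two distinct zeros of `I` in `(θ, π/2)`. -/
lemma zeros_aux (hb : 0 < b) (hab : 2 * b < a) (hlam : 1 < lam) {x1 x2 : ℝ}
    (hm1 : x1 ∈ Set.Ioo (Real.arcsin (Real.sqrt (b / a))) (π / 2))
    (hm2 : x2 ∈ Set.Ioo (Real.arcsin (Real.sqrt (b / a))) (π / 2))
    (hz1 : Ifun a b lam x1 = 0) (hz2 : Ifun a b lam x2 = 0) (hlt : x1 < x2) : False := by
  have ha : (0:ℝ) < a := by linarith
  have hcont := continuous_Ifun a b lam (ne_of_gt ha)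
  have hd2 : deriv (Ifun a b lam) x2 < 0 := deriv_Ifun_neg hb hab hlam hm2.1 hm2.2 hz2
  have hf2 : HasDerivAt (Ifun a b lam) (deriv (Ifun a b lam) x2) x2 :=
    (hasDerivAt_Ifun a b lam x2 (ne_of_gt ha)).differentiableAt.hasDerivAt
  obtain ⟨y, hymem, hy⟩ := pos_left_of_deriv_neg hf2 hd2 hz2 hlt
  set Z := Set.Icc x1 y ∩ (Ifun a b lam) ⁻¹' {0} with hZ
  have hZc : IsCompact Z := isCompact_Icc.inter_right (isClosed_singleton.preimage hcont)
  have hZne : Z.Nonempty := ⟨x1, ⟨le_refl x1, hymem.1.le⟩, by simpa using hz1⟩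
  obtain ⟨z0, hz0Z, hz0ub⟩ := hZc.exists_isGreatest hZne
  obtain ⟨⟨hz0a, hz0b⟩, hz0pre⟩ := hz0Z
  have hz0zero : Ifun a b lam z0 = 0 := by simpa using hz0pre
  have hz0y : z0 < y := by
    rcases lt_or_eq_of_le hz0b with h | h
    · exact h
    · exfalso; rw [h] at hz0zero; linarith
  have hz0mem : z0 ∈ Set.Ioo (Real.arcsin (Real.sqrt (b / a))) (π / 2) :=
    ⟨lt_of_lt_of_le hm1.1 hz0a, by linarith [hymem.2, hm2.2]⟩
  have hdz0 : deriv (Ifun a b lam) z0 < 0 :=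
    deriv_Ifun_neg hb hab hlam hz0mem.1 hz0mem.2 hz0zero
  have hfz0 : HasDerivAt (Ifun a b lam) (deriv (Ifun a b lam) z0) z0 :=
    (hasDerivAt_Ifun a b lam z0 (ne_of_gt ha)).differentiableAt.hasDerivAt
  obtain ⟨w, hwmem, hw⟩ := neg_right_of_deriv_neg hfz0 hdz0 hz0zero hz0y
  have hivt := intermediate_value_Ioo (le_of_lt hwmem.2) hcont.continuousOn
    (show (0:ℝ) ∈ Set.Ioo (Ifun a b lam w) (Ifun a b lam y) from ⟨hw, hy⟩)
  obtain ⟨z, hzmem, hzzero⟩ := hivt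
  have : z ∈ Z := ⟨⟨by linarith [hwmem.1, hzmem.1], hzmem.2.le⟩, by simpa using hzzero⟩
  have := hz0ub this
  linarith [hwmem.1, hzmem.1]

end Main

theorem I_has_unique_zero (a b lam : ℝ) (hb : 0 < b) (hab : 2 * b < a) (hlam : 1 < lam) :
    (∃ xs ∈ Set.Ioo (Real.arcsin (Real.sqrt (b / a))) (Real.pi / 2),
      Ifun a b lam xs = 0 ∧ deriv (Ifun a b lam) xs < 0 ∧
      ∀ x ∈ Set.Ioo (0 : ℝ) (Real.pi / 2), Ifun a b lam x = 0 → x = xs) ∧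
    ∀ x ∈ Set.Ioc (0 : ℝ) (Real.arcsin (Real.sqrt (b / a))), 0 < Ifun a b lam x := by
  have ha : (0:ℝ) < a := by linarith
  obtain ⟨ht0, ht2, hts⟩ := theta_facts hb hab
  have hcont := continuous_Ifun a b lam (ne_of_gt ha)
  have hpos := Ifun_pos hb hab hlam
  refine ⟨?_, hpos⟩
  -- value at θ is positive
  have hIθ : 0 < Ifun a b lam (Real.arcsin (Real.sqrt (b / a))) :=
    hpos _ ⟨ht0, le_refl _⟩
  -- value at π/2 is negative
  have hIπ : Ifun a b lam (π / 2) < 0 := by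
    have hF : Fnl a b (π / 2) = 0 := by
      rw [Fnl_eq a b _ (ne_of_gt ha), Real.cos_pi_div_two]; ring
    have hFd : Fd a b (π / 2) = b - a := by
      rw [Fd, Real.sin_pi_div_two]; ring
    rw [Ifun_apply a b lam _ (ne_of_gt ha), hF, hFd]
    have := Real.pi_pos
    nlinarith
  -- existence by IVT
  obtain ⟨xs, hxsmem, hxszero⟩ := intermediate_value_Ioo' ht2.le hcont.continuousOn
    (show (0:ℝ) ∈ Set.Ioo (Ifun a b lam (π/2)) (Ifun a b lam (Real.arcsin (Real.sqrt (b / a))))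
      from ⟨hIπ, hIθ⟩)
  refine ⟨xs, hxsmem, hxszero, deriv_Ifun_neg hb hab hlam hxsmem.1 hxsmem.2 hxszero, ?_⟩
  intro x hx hz
  rcases le_or_gt x (Real.arcsin (Real.sqrt (b / a))) with hle | hgt
  · exfalso
    have := hpos x ⟨hx.1, hle⟩
    linarith
  · rcases lt_trichotomy x xs with h | h | h
    · exact absurd (zeros_aux hb hab hlam ⟨hgt, hx.2⟩ hxsmem hz hxszero h) id
    · exact h
    · exact absurd (zeros_aux hb hab hlam hxsmem ⟨hgt, hx.2⟩ hxszero hz h) id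
end
end
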